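/- Let G = K_1 + (K_2 ∪ (n−2)K_1), the join of a single vertex with the disjoint union of an edge and n−2 isolated vertices, and let e be the edge of the K_2. Then D(G − e) = n while D(G) = n − 2. -/

import Mathlib

open SimpleGraph

/-- Distinguishing number: least `d` admitting a vertex labeling with `d` labels
preserved only by the identity automorphism. -/
noncomputable def distNum {V : Type*} (G : SimpleGraph V) : ℕ :=
  sInf {d : ℕ | ∃ f : V → Fin d,
    ∀ φ : G ≃g G, (∀ x : V, f (φ x) = f x) → ∀ x : V, φ x = x}

/-- Distinguishing index: least `d` admitting an edge coloring with `d` colors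
preserved only by the identity automorphism. -/
noncomputable def distIdx {V : Type*} (G : SimpleGraph V) : ℕ :=
  sInf {d : ℕ | ∃ f : Sym2 V → Fin d,
    ∀ φ : G ≃g G, (∀ e ∈ G.edgeSet, f (Sym2.map φ e) = f e) → ∀ x : V, φ x = x}

/-- `G ⊙ v`: remove all edges joining two neighbors of `v`. -/
def SimpleGraph.odot {V : Type*} (G : SimpleGraph V) (v : V) : SimpleGraph V :=
  G.deleteEdges {e | ∀ x ∈ e, G.Adj v x}

/-- Vertex contraction `G ∘ v`: delete `v` and put a clique on its neighborhood. -/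
def SimpleGraph.vContract {V : Type*} (G : SimpleGraph V) (v : V) :
    SimpleGraph {u : V // u ≠ v} where
  Adj x y := x ≠ y ∧ (G.Adj x.1 y.1 ∨ (G.Adj v x.1 ∧ G.Adj v y.1))
  symm := by
    refine ⟨?_⟩
    rintro x y ⟨h1, h2 | ⟨h3, h4⟩⟩
    exacts [⟨h1.symm, Or.inl h2.symm⟩, ⟨h1.symm, Or.inr ⟨h4, h3⟩⟩]
  loopless := ⟨fun x h => h.1 rfl⟩

/-- Edge contraction `G ∘ e` for `e = uv`: merge `v` into `u`. -/
def SimpleGraph.eContract {V : Type*} (G : SimpleGraph V) (u v : V) :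
    SimpleGraph {x : V // x ≠ v} where
  Adj x y := x ≠ y ∧ (G.Adj x.1 y.1 ∨ (x.1 = u ∧ G.Adj v y.1) ∨ (y.1 = u ∧ G.Adj v x.1))
  symm := by
    refine ⟨?_⟩
    rintro x y ⟨h1, h2⟩
    refine ⟨h1.symm, ?_⟩
    rcases h2 with h | ⟨ha, hb⟩ | ⟨ha, hb⟩
    · exact Or.inl h.symm
    · exact Or.inr (Or.inr ⟨ha, hb⟩)
    · exact Or.inr (Or.inl ⟨ha, hb⟩)
  loopless := ⟨fun x h => h.1 rfl⟩

/-- The star `K_{1,n}`. -/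
def starG (n : ℕ) : SimpleGraph (Fin 1 ⊕ Fin n) := completeBipartiteGraph (Fin 1) (Fin n)

/-- The friendship graph `F_n = K_1 + n K_2`; `none` is the central vertex. -/
def friendshipGraph (n : ℕ) : SimpleGraph (Option (Fin n × Fin 2)) where
  Adj x y := x ≠ y ∧ (x = none ∨ y = none ∨ ∃ i a b, x = some (i, a) ∧ y = some (i, b))
  symm := by
    refine ⟨?_⟩
    rintro x y ⟨h1, h2⟩
    refine ⟨h1.symm, ?_⟩
    rcases h2 with h | h | ⟨i, a, b, hx, hy⟩
    · exact Or.inr (Or.inl h)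
    · exact Or.inl h
    · exact Or.inr (Or.inr ⟨i, b, a, hy, hx⟩)
  loopless := ⟨fun x h => h.1 rfl⟩

/-- `K_1 + (K_2 ∪ (n-2) K_1)` on `Fin (n+1)`: vertex `0` is the join apex,
vertices `1, 2` form the `K_2`, the rest are the isolated vertices. -/
def joinGraph (n : ℕ) : SimpleGraph (Fin (n + 1)) where
  Adj x y := x ≠ y ∧ (x = 0 ∨ y = 0 ∨ ((x = 1 ∨ x = 2) ∧ (y = 1 ∨ y = 2)))
  symm := ⟨by rintro x y ⟨h1, h2⟩; exact ⟨h1.symm, by tauto⟩⟩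
  loopless := ⟨fun x h => h.1 rfl⟩

/-!
In both graphs the apex `0` is the only universal vertex, so every automorphism fixes it.
Two twins (vertices with the same neighbours apart from each other) are exchanged by an
automorphism, so a distinguishing labeling is injective on any set of pairwise twins: the `n`
leaves of `G - e`, respectively the `n - 2` pendant vertices of `G`. Conversely, labelings
injective on those sets distinguish: in `G` the only edge avoiding the apex is `{1, 2}`, so
automorphisms preserve it, and labeling `1` and `2` differently pins both ends.
-/

namespace SimpleGraph

variable {V : Type*} (G : SimpleGraph V)

def IsDistinguishing {α : Type*} (f : V → α) : Prop :=
  ∀ φ : G ≃g G, (∀ x, f (φ x) = f x) → ∀ x, φ x = x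

def AreTwins (x y : V) : Prop :=
  ∀ z, z ≠ x → z ≠ y → (G.Adj x z ↔ G.Adj y z)

variable {G}

lemma distNum_eq_of_isLeast {d : ℕ}
    (h : IsLeast {d : ℕ | ∃ f : V → Fin d, G.IsDistinguishing f} d) : distNum G = d :=
  h.csInf_eq

lemma AreTwins.adj_swap [DecidableEq V] {x y : V} (h : G.AreTwins x y) (z : V) :
    G.Adj x (Equiv.swap x y z) ↔ G.Adj y z := by
  rcases eq_or_ne z x with rfl | hzx
  · simp only [Equiv.swap_apply_left, adj_comm]
  rcases eq_or_ne z y with rfl | hzy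
  · simp only [Equiv.swap_apply_right, G.loopless.irrefl]
  · rw [Equiv.swap_apply_of_ne_of_ne hzx hzy, h z hzx hzy]

lemma AreTwins.symm {x y : V} (h : G.AreTwins x y) : G.AreTwins y x :=
  fun z hzy hzx => (h z hzx hzy).symm

lemma AreTwins.swap_adj_swap [DecidableEq V] {x y : V} (h : G.AreTwins x y) (a b : V) :
    G.Adj (Equiv.swap x y a) (Equiv.swap x y b) ↔ G.Adj a b := by
  rcases eq_or_ne a x with rfl | hax
  · rw [Equiv.swap_apply_left, Equiv.swap_comm, h.symm.adj_swap]
  rcases eq_or_ne a y with rfl | hay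
  · rw [Equiv.swap_apply_right, h.adj_swap]
  rw [Equiv.swap_apply_of_ne_of_ne hax hay, G.adj_comm a, G.adj_comm a]
  rcases eq_or_ne b x with rfl | hbx
  · rw [Equiv.swap_apply_left, ← h a hax hay]
  rcases eq_or_ne b y with rfl | hby
  · rw [Equiv.swap_apply_right, h a hax hay]
  · rw [Equiv.swap_apply_of_ne_of_ne hbx hby]

def AreTwins.swapIso [DecidableEq V] {x y : V} (h : G.AreTwins x y) : G ≃g G :=
  ⟨Equiv.swap x y, h.swap_adj_swap _ _⟩

lemma IsDistinguishing.eq_of_areTwins {α : Type*} {f : V → α} (hf : G.IsDistinguishing f)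
    {x y : V} (hxy : G.AreTwins x y) (h : f x = f y) : x = y := by
  classical
  have hswap : ∀ z, f (Equiv.swap x y z) = f z := by
    intro z
    rcases eq_or_ne z x with rfl | hzx
    · rw [Equiv.swap_apply_left, h]
    rcases eq_or_ne z y with rfl | hzy
    · rw [Equiv.swap_apply_right, h]
    · rw [Equiv.swap_apply_of_ne_of_ne hzx hzy]
  have := hf hxy.swapIso hswap x
  exact (Equiv.swap_apply_left x y ▸ this).symm

lemma IsDistinguishing.card_le {ι : Type*} [Fintype ι] {e : ι → V} (he : e.Injective)
    (htwins : ∀ i j, G.AreTwins (e i) (e j)) {d : ℕ} {f : V → Fin d}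
    (hf : G.IsDistinguishing f) : Fintype.card ι ≤ d := by
  simpa using Fintype.card_le_of_injective (f ∘ e)
    fun i j h => he (hf.eq_of_areTwins (htwins i j) h)

lemma IsUniversal.map {v : V} (hv : G.IsUniversal v) (φ : G ≃g G) : G.IsUniversal (φ v) := by
  intro x hx
  rw [← φ.apply_symm_apply x]
  exact φ.map_rel_iff.2 (hv fun h => hx (by rw [h, φ.apply_symm_apply]))

lemma IsUniversal.apply_eq {v : V} (hv : G.IsUniversal v)
    (huniq : ∀ w, G.IsUniversal w → w = v) (φ : G ≃g G) : φ v = v :=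
  huniq _ (hv.map φ)

lemma isDistinguishing_of_injOn_compl {α : Type*} {f : V → α} (A : Set V)
    (hA : ∀ φ : G ≃g G, (∀ x, f (φ x) = f x) → ∀ a ∈ A, φ a = a) (hf : Set.InjOn f Aᶜ) :
    G.IsDistinguishing f := by
  intro φ hφ x
  by_cases hx : x ∈ A
  · exact hA φ hφ x hx
  have hφx : φ x ∉ A := fun h => hx (φ.injective (hA φ hφ _ h) ▸ h)
  exact hf hφx hx (hφ x)

end SimpleGraph

abbrev joinGraphDeleteEdge (n : ℕ) : SimpleGraph (Fin (n + 1)) :=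
  (joinGraph n).deleteEdges {s((1 : Fin (n + 1)), (2 : Fin (n + 1)))}

section joinGraph

open SimpleGraph

variable {n : ℕ}

lemma Fin.val_one_of_one_le (hn : 1 ≤ n) : ((1 : Fin (n + 1)) : ℕ) = 1 := by
  rw [Fin.val_one', Nat.mod_eq_of_lt (by omega)]

lemma Fin.val_two_of_two_le (hn : 2 ≤ n) : ((2 : Fin (n + 1)) : ℕ) = 2 := by
  rw [Fin.coe_ofNat_eq_mod, Nat.mod_eq_of_lt (by omega)]

lemma joinGraph_adj_iff (hn : 2 ≤ n) {x y : Fin (n + 1)} :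
    (joinGraph n).Adj x y ↔
      (x : ℕ) ≠ y ∧ ((x : ℕ) = 0 ∨ (y : ℕ) = 0 ∨ ((x : ℕ) ≤ 2 ∧ (y : ℕ) ≤ 2)) := by
  simp only [joinGraph, ne_eq, Fin.ext_iff, Fin.val_zero,
    Fin.val_one_of_one_le (n := n) (by omega), Fin.val_two_of_two_le hn]
  omega

lemma joinGraphDeleteEdge_adj_iff (hn : 2 ≤ n) {x y : Fin (n + 1)} :
    (joinGraphDeleteEdge n).Adj x y ↔ (x : ℕ) ≠ y ∧ ((x : ℕ) = 0 ∨ (y : ℕ) = 0) := by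
  simp only [deleteEdges_adj, joinGraph_adj_iff hn, Set.mem_singleton_iff, Sym2.eq_iff,
    Fin.ext_iff, Fin.val_one_of_one_le (n := n) (by omega), Fin.val_two_of_two_le hn]
  omega

lemma joinGraph_eq_zero_of_isUniversal (hn : 4 ≤ n) {v : Fin (n + 1)}
    (hv : (joinGraph n).IsUniversal v) : v = 0 := by
  have h3 := @hv ⟨3, by omega⟩
  have h4 := @hv ⟨4, by omega⟩
  simp only [ne_eq, Fin.ext_iff, Fin.val_zero, joinGraph_adj_iff (by omega : 2 ≤ n)] at h3 h4 ⊢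
  omega

lemma joinGraph_areTwins (hn : 2 ≤ n) {x y : Fin (n + 1)} (hx : 3 ≤ (x : ℕ))
    (hy : 3 ≤ (y : ℕ)) : (joinGraph n).AreTwins x y := by
  intro z hzx hzy
  simp only [ne_eq, Fin.ext_iff] at hzx hzy
  simp only [joinGraph_adj_iff hn]
  omega

lemma joinGraphDeleteEdge_isUniversal_zero (hn : 2 ≤ n) :
    (joinGraphDeleteEdge n).IsUniversal 0 := by
  intro x hx
  exact (joinGraphDeleteEdge_adj_iff hn).2 ⟨fun h => hx (Fin.ext h), Or.inl rfl⟩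

lemma joinGraphDeleteEdge_areTwins (hn : 2 ≤ n) {x y : Fin (n + 1)} (hx : x ≠ 0)
    (hy : y ≠ 0) : (joinGraphDeleteEdge n).AreTwins x y := by
  intro z hzx hzy
  simp only [ne_eq, Fin.ext_iff, Fin.val_zero] at hx hy hzx hzy
  simp only [joinGraphDeleteEdge_adj_iff hn]
  omega

lemma joinGraphDeleteEdge_eq_zero_of_isUniversal (hn : 4 ≤ n) {v : Fin (n + 1)}
    (hv : (joinGraphDeleteEdge n).IsUniversal v) : v = 0 :=
  joinGraph_eq_zero_of_isUniversal hn fun _ h => deleteEdges_le _ (hv h)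

lemma joinGraph_isUniversal_zero (hn : 2 ≤ n) : (joinGraph n).IsUniversal 0 :=
  fun _ h => deleteEdges_le _ (joinGraphDeleteEdge_isUniversal_zero hn h)

lemma joinGraph_apply_zero (hn : 4 ≤ n) (φ : joinGraph n ≃g joinGraph n) : φ 0 = 0 :=
  (joinGraph_isUniversal_zero (by omega)).apply_eq
    (fun _ => joinGraph_eq_zero_of_isUniversal hn) φ

lemma joinGraph_iso_apply_mem_Icc (hn : 4 ≤ n) (φ : joinGraph n ≃g joinGraph n)
    {x : Fin (n + 1)} (hx : (x : ℕ) ∈ Set.Icc 1 2) : (φ x : ℕ) ∈ Set.Icc 1 2 := by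
  have hφ0 := joinGraph_apply_zero hn φ
  have hne : ∀ z : Fin (n + 1), (z : ℕ) ≠ 0 → (φ z : ℕ) ≠ 0 := fun z hz h =>
    hz (congrArg Fin.val (φ.injective ((Fin.ext h).trans hφ0.symm)))
  rw [Set.mem_Icc] at hx ⊢
  -- `x` lies on the edge `{1, 2}`, whose image avoids the fixed vertex `0`
  let y : Fin (n + 1) := ⟨3 - x, by omega⟩
  have hy : (y : ℕ) = 3 - x := rfl
  have hxy : (joinGraph n).Adj x y := (joinGraph_adj_iff (by omega)).2 (by omega)
  have := (joinGraph_adj_iff (by omega)).1 (φ.map_rel_iff.2 hxy)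
  have := hne x (by omega)
  have := hne y (by omega)
  omega

lemma exists_isDistinguishing_joinGraphDeleteEdge (hn : 4 ≤ n) :
    ∃ f : Fin (n + 1) → Fin n, (joinGraphDeleteEdge n).IsDistinguishing f := by
  refine ⟨fun x => ⟨x - 1, by omega⟩,
    isDistinguishing_of_injOn_compl {0} (fun φ _ a ha => ?_) ?_⟩
  · rw [ha]
    exact (joinGraphDeleteEdge_isUniversal_zero (by omega)).apply_eq
      (fun _ => joinGraphDeleteEdge_eq_zero_of_isUniversal hn) φ
  · intro x hx y hy h
    simp only [Set.mem_compl_iff, Set.mem_singleton_iff, Fin.ext_iff, Fin.val_zero] at hx hy h ⊢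
    omega

lemma le_of_isDistinguishing_joinGraphDeleteEdge (hn : 2 ≤ n) {d : ℕ}
    {f : Fin (n + 1) → Fin d} (hf : (joinGraphDeleteEdge n).IsDistinguishing f) : n ≤ d := by
  simpa using hf.card_le (Fin.succ_injective n) fun i j =>
    joinGraphDeleteEdge_areTwins hn (Fin.succ_ne_zero i) (Fin.succ_ne_zero j)

lemma exists_isDistinguishing_joinGraph (hn : 4 ≤ n) :
    ∃ f : Fin (n + 1) → Fin (n - 2), (joinGraph n).IsDistinguishing f := by
  refine ⟨fun x => ⟨if (x : ℕ) = 2 then 1 else x - 3, by split_ifs <;> omega⟩,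
    isDistinguishing_of_injOn_compl {x | (x : ℕ) ≤ 2} (fun φ hφ a ha => ?_) ?_⟩
  · rcases Nat.eq_zero_or_pos a with h0 | hpos
    · rw [show a = 0 from Fin.ext h0]
      exact joinGraph_apply_zero hn φ
    have hφa := joinGraph_iso_apply_mem_Icc hn φ (x := a) ⟨hpos, ha⟩
    have hlabel := congrArg Fin.val (hφ a)
    simp only [Set.mem_ofPred_eq, Set.mem_Icc] at ha hφa hlabel
    apply Fin.ext
    split_ifs at hlabel <;> omega
  · intro x hx y hy h
    simp only [Set.mem_compl_iff, Set.mem_ofPred_eq, not_le, Fin.mk.injEq] at hx hy h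
    split_ifs at h <;> omega

lemma le_of_isDistinguishing_joinGraph (hn : 2 ≤ n) {d : ℕ}
    {f : Fin (n + 1) → Fin d} (hf : (joinGraph n).IsDistinguishing f) : n - 2 ≤ d := by
  have he : (fun i : Fin (n - 2) => (⟨i + 3, by omega⟩ : Fin (n + 1))).Injective :=
    fun i j h => Fin.ext (by simpa using h)
  simpa using hf.card_le he fun i j => joinGraph_areTwins hn (by simp) (by simp)

theorem distNum_joinGraphDeleteEdge (hn : 4 ≤ n) : distNum (joinGraphDeleteEdge n) = n :=
  distNum_eq_of_isLeast ⟨exists_isDistinguishing_joinGraphDeleteEdge hn,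
    fun _ ⟨_, hf⟩ => le_of_isDistinguishing_joinGraphDeleteEdge (by omega) hf⟩

theorem distNum_joinGraph (hn : 4 ≤ n) : distNum (joinGraph n) = n - 2 :=
  distNum_eq_of_isLeast ⟨exists_isDistinguishing_joinGraph hn,
    fun _ ⟨_, hf⟩ => le_of_isDistinguishing_joinGraph (by omega) hf⟩

end joinGraph

theorem stmt7 (n : ℕ) (hn : 4 ≤ n) :
    distNum ((joinGraph n).deleteEdges {s((1 : Fin (n + 1)), (2 : Fin (n + 1)))}) = n ∧
    distNum (joinGraph n) = n - 2 :=
  ⟨distNum_joinGraphDeleteEdge hn, distNum_joinGraph hn⟩
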